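/- Let β, J > 0 and define Θ : (−1,1) → ℝ by Θ(s) = (1/J)(−s + ((1+J)/β)·log((1+s)/(1−s))). If −1 < Θ'(0) < 1, where Θ'(0) = (1/J)(2(1+J)/β − 1), then the set {(s,t) ∈ (−1,1) × (−1,1) : Θ(s) = t and Θ(t) = s} has exactly three elements. -/

import Mathlib

/-!
The derivative `Θ'(s)` increases with `s²`, so `Θ' ≥ Θ'(0) > -1` and `Θ + id` is strictly
increasing; since `Θ s = t`, `Θ t = s` give `Θ s + s = Θ t + t`, every solution has `s = t`,
i.e. is a fixed point of `Θ`. On `[0, 1)` the function `Θ - id` is strictly convex, vanishes at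
`0` with negative slope `Θ'(0) - 1` and is positive at `tanh (β / 2)`, so it has exactly one
zero `a` in `(0, 1)`. As `Θ` is odd, its fixed points are `-a`, `0` and `a`.
-/

open Real Set Filter Topology

noncomputable def theta (β J s : ℝ) : ℝ :=
  (1 / J) * (-s + ((1 + J) / β) * log ((1 + s) / (1 - s)))

noncomputable def thetaDeriv (β J s : ℝ) : ℝ :=
  (1 / J) * (2 * (1 + J) / (β * (1 - s ^ 2)) - 1)

section

variable {β J : ℝ}

lemma theta_neg (s : ℝ) : theta β J (-s) = -theta β J s := by
  rw [theta, theta, show (1 + -s) / (1 - -s) = ((1 + s) / (1 - s))⁻¹ by rw [inv_div]; ring_nf,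
    log_inv]
  ring

@[simp]
lemma theta_zero : theta β J 0 = 0 := by simp [theta]

lemma thetaDeriv_zero : thetaDeriv β J 0 = (1 / J) * (2 * (1 + J) / β - 1) := by
  simp [thetaDeriv]

lemma hasDerivAt_theta {s : ℝ} (hs : s ∈ Ioo (-1 : ℝ) 1) :
    HasDerivAt (theta β J) (thetaDeriv β J s) s := by
  obtain ⟨h1, h2⟩ : 0 < 1 + s ∧ 0 < 1 - s := ⟨by linarith [hs.1], by linarith [hs.2]⟩
  have hq : HasDerivAt (fun x => (1 + x) / (1 - x))
      ((1 * (1 - s) - (1 + s) * -1) / (1 - s) ^ 2) s :=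
    ((hasDerivAt_id s).const_add 1).div ((hasDerivAt_id s).const_sub 1) h2.ne'
  refine (((hasDerivAt_id' s).neg.add ((hq.log (div_pos h1 h2).ne').const_mul
    ((1 + J) / β))).const_mul (1 / J)).congr_deriv ?_
  rw [thetaDeriv, show 1 - s ^ 2 = (1 + s) * (1 - s) by ring]
  field_simp
  ring

lemma continuousOn_theta : ContinuousOn (theta β J) (Ioo (-1) 1) :=
  fun _ hs => (hasDerivAt_theta hs).continuousAt.continuousWithinAt

lemma thetaDeriv_lt_thetaDeriv (hβ : 0 < β) (hJ : 0 < J) {s t : ℝ} (hst : s ^ 2 < t ^ 2)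
    (ht : t ^ 2 < 1) : thetaDeriv β J s < thetaDeriv β J t := by
  have : 0 < 1 - t ^ 2 := by linarith
  unfold thetaDeriv
  gcongr

lemma thetaDeriv_zero_le (hβ : 0 < β) (hJ : 0 < J) {s : ℝ} (hs : s ∈ Ioo (-1 : ℝ) 1) :
    thetaDeriv β J 0 ≤ thetaDeriv β J s := by
  rcases eq_or_ne s 0 with rfl | hs0
  · rfl
  · exact (thetaDeriv_lt_thetaDeriv hβ hJ (by simpa [sq_pos_iff] using hs0)
      (sq_lt_one_iff_abs_lt_one s |>.2 (abs_lt.2 hs))).le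

lemma strictMonoOn_theta_add_self (hβ : 0 < β) (hJ : 0 < J) (h₁ : -1 < thetaDeriv β J 0) :
    StrictMonoOn (fun s => theta β J s + s) (Ioo (-1) 1) := by
  refine strictMonoOn_of_deriv_pos (convex_Ioo _ _)
    (continuousOn_theta.add continuousOn_id) fun s hs => ?_
  rw [interior_Ioo] at hs
  have hd : HasDerivAt (fun s => theta β J s + s) (thetaDeriv β J s + 1) s :=
    (hasDerivAt_theta hs).add (hasDerivAt_id s)
  rw [hd.deriv]
  linarith [thetaDeriv_zero_le hβ hJ hs]

lemma eq_of_theta_eq_of_theta_eq (hβ : 0 < β) (hJ : 0 < J) (h₁ : -1 < thetaDeriv β J 0)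
    {s t : ℝ} (hs : s ∈ Ioo (-1 : ℝ) 1) (ht : t ∈ Ioo (-1 : ℝ) 1)
    (hst : theta β J s = t) (hts : theta β J t = s) : s = t :=
  (strictMonoOn_theta_add_self hβ hJ h₁).injOn hs ht (by simp only [hst, hts, add_comm])

lemma strictConvexOn_theta_sub_self (hβ : 0 < β) (hJ : 0 < J) :
    StrictConvexOn ℝ (Ico 0 1) (fun s => theta β J s - s) := by
  have hIco : Ico (0 : ℝ) 1 ⊆ Ioo (-1) 1 := Ico_subset_Ioo_left (by norm_num)
  refine StrictMonoOn.strictConvexOn_of_deriv (convex_Ico _ _)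
    ((continuousOn_theta.sub continuousOn_id).mono hIco) ?_
  rw [interior_Ico]
  have hd : ∀ s ∈ Ioo (0 : ℝ) 1, deriv (fun s => theta β J s - s) s = thetaDeriv β J s - 1 :=
    fun s hs => ((hasDerivAt_theta (hIco (Ioo_subset_Ico_self hs))).sub (hasDerivAt_id s)).deriv
  intro s hs t ht hst
  rw [hd s hs, hd t ht]
  gcongr
  exact thetaDeriv_lt_thetaDeriv hβ hJ (by nlinarith [hs.1]) (by nlinarith [ht.1, ht.2])

lemma eq_of_theta_eq_self (hβ : 0 < β) (hJ : 0 < J) {a b : ℝ} (ha : a ∈ Ioo (0 : ℝ) 1)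
    (hb : b ∈ Ioo (0 : ℝ) 1) (hfa : theta β J a = a) (hfb : theta β J b = b) : a = b := by
  have key : ∀ {x y : ℝ}, x ∈ Ioo (0 : ℝ) 1 → y ∈ Ioo (0 : ℝ) 1 → theta β J y = y → x < y →
      theta β J x - x < 0 := fun hx hy hfy hxy => by
    simpa [hfy] using (strictConvexOn_theta_sub_self hβ hJ).lt_on_openSegment
      (left_mem_Ico.2 one_pos) (Ioo_subset_Ico_self hy) hy.1.ne
      (Ioo_subset_openSegment ⟨hx.1, hxy⟩)
  rcases lt_trichotomy a b with hab | hab | hab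
  · linarith [key ha hb hfb hab]
  · exact hab
  · linarith [key hb ha hfa hab]

lemma eventually_theta_lt_self (h₂ : thetaDeriv β J 0 < 1) :
    ∀ᶠ s in 𝓝[>] 0, theta β J s < s := by
  have hd : HasDerivAt (fun s => theta β J s - s) (thetaDeriv β J 0 - 1) 0 :=
    (hasDerivAt_theta (by norm_num)).sub (hasDerivAt_id 0)
  have hslope := (hasDerivAt_iff_tendsto_slope.mp hd).mono_left (nhdsGT_le_nhdsNE 0)
  filter_upwards [hslope.eventually (eventually_lt_nhds (sub_neg.2 h₂)), self_mem_nhdsWithin]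
    with s hs (hs0 : 0 < s)
  rw [slope_def_field] at hs
  simp only [theta_zero, sub_zero] at hs
  linarith [(div_lt_iff₀ hs0).1 hs]

lemma log_one_add_tanh_div_one_sub_tanh (x : ℝ) :
    log ((1 + tanh x) / (1 - tanh x)) = 2 * x := by
  have := artanh_eq_half_log (Ioo_subset_Icc_self ⟨neg_one_lt_tanh x, tanh_lt_one x⟩)
  rw [artanh_tanh] at this
  linarith

lemma exists_lt_theta (hβ : 0 < β) (hJ : 0 < J) : ∃ s ∈ Ioo (0 : ℝ) 1, s < theta β J s := by
  set s := tanh (β / 2)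
  have hs1 : s < 1 := tanh_lt_one _
  have hs0 : 0 < s := lt_of_not_ge fun h => (artanh_nonpos h).not_gt (by
    rw [artanh_tanh]; positivity)
  refine ⟨s, ⟨hs0, hs1⟩, ?_⟩
  rw [theta, log_one_add_tanh_div_one_sub_tanh]
  field_simp
  nlinarith

lemma exists_theta_eq_self (hβ : 0 < β) (hJ : 0 < J) (h₂ : thetaDeriv β J 0 < 1) :
    ∃ a ∈ Ioo (0 : ℝ) 1, theta β J a = a := by
  obtain ⟨b, hb, hbθ⟩ := exists_lt_theta hβ hJ
  obtain ⟨δ, hδθ, hδ⟩ := ((eventually_theta_lt_self h₂).and (Ioo_mem_nhdsGT hb.1)).exists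
  have hcont : ContinuousOn (fun s => theta β J s - s) (Icc δ b) :=
    (continuousOn_theta.sub continuousOn_id).mono (Icc_subset_Ioo (by linarith [hδ.1]) hb.2)
  obtain ⟨a, ha, hθa⟩ := intermediate_value_Ioo hδ.2.le hcont ⟨sub_neg.2 hδθ, sub_pos.2 hbθ⟩
  exact ⟨a, ⟨hδ.1.trans ha.1, ha.2.trans hb.2⟩, sub_eq_zero.1 hθa⟩

lemma theta_eq_self_iff (hβ : 0 < β) (hJ : 0 < J) {a : ℝ} (ha : a ∈ Ioo (0 : ℝ) 1)
    (hθa : theta β J a = a) {s : ℝ} :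
    s ∈ Ioo (-1 : ℝ) 1 ∧ theta β J s = s ↔ s = -a ∨ s = 0 ∨ s = a := by
  constructor
  · rintro ⟨hs, hθs⟩
    rcases lt_trichotomy s 0 with hneg | rfl | hpos
    · have := eq_of_theta_eq_self hβ hJ ⟨neg_pos.2 hneg, by linarith [hs.1]⟩ ha
        (by rw [theta_neg, hθs]) hθa
      left; linarith
    · simp
    · exact Or.inr (Or.inr (eq_of_theta_eq_self hβ hJ ⟨hpos, hs.2⟩ ha hθs hθa))
  · rintro (rfl | rfl | rfl)
    · exact ⟨⟨by linarith [ha.2], by linarith [ha.1]⟩, by rw [theta_neg, hθa]⟩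
    · exact ⟨by norm_num, theta_zero⟩
    · exact ⟨⟨by linarith [ha.1], ha.2⟩, hθa⟩

lemma theta_twoCycle_iff (hβ : 0 < β) (hJ : 0 < J) (h₁ : -1 < thetaDeriv β J 0) {s t : ℝ} :
    s ∈ Ioo (-1 : ℝ) 1 ∧ t ∈ Ioo (-1 : ℝ) 1 ∧ theta β J s = t ∧ theta β J t = s ↔
      s = t ∧ s ∈ Ioo (-1 : ℝ) 1 ∧ theta β J s = s := by
  constructor
  · rintro ⟨hs, ht, hst, hts⟩
    obtain rfl := eq_of_theta_eq_of_theta_eq hβ hJ h₁ hs ht hst hts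
    exact ⟨rfl, hs, hst⟩
  · rintro ⟨rfl, hs, hθs⟩
    exact ⟨hs, hs, hθs, hθs⟩

lemma setOf_theta_twoCycle_eq (hβ : 0 < β) (hJ : 0 < J) (h₁ : -1 < thetaDeriv β J 0) {a : ℝ}
    (ha : a ∈ Ioo (0 : ℝ) 1) (hθa : theta β J a = a) :
    {p : ℝ × ℝ | p.1 ∈ Ioo (-1 : ℝ) 1 ∧ p.2 ∈ Ioo (-1 : ℝ) 1 ∧
      theta β J p.1 = p.2 ∧ theta β J p.2 = p.1} = {(-a, -a), (0, 0), (a, a)} := by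
  ext ⟨s, t⟩
  simp only [mem_ofPred_eq, mem_insert_iff, mem_singleton_iff, Prod.mk.injEq]
  rw [theta_twoCycle_iff hβ hJ h₁, theta_eq_self_iff hβ hJ ha hθa]
  grind

end

theorem stmt_0 (β J : ℝ) (hβ : 0 < β) (hJ : 0 < J)
    (h₁ : -1 < (1 / J) * (2 * (1 + J) / β - 1))
    (h₂ : (1 / J) * (2 * (1 + J) / β - 1) < 1) :
    {p : ℝ × ℝ | p.1 ∈ Ioo (-1 : ℝ) 1 ∧ p.2 ∈ Ioo (-1 : ℝ) 1 ∧
      (1 / J) * (-p.1 + ((1 + J) / β) * Real.log ((1 + p.1) / (1 - p.1))) = p.2 ∧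
      (1 / J) * (-p.2 + ((1 + J) / β) * Real.log ((1 + p.2) / (1 - p.2))) = p.1}.ncard
      = 3 := by
  rw [← thetaDeriv_zero] at h₁ h₂
  obtain ⟨a, ha, hθa⟩ := exists_theta_eq_self hβ hJ h₂
  change Set.ncard {p : ℝ × ℝ | p.1 ∈ Ioo (-1 : ℝ) 1 ∧ p.2 ∈ Ioo (-1 : ℝ) 1 ∧
    theta β J p.1 = p.2 ∧ theta β J p.2 = p.1} = 3
  rw [setOf_theta_twoCycle_eq hβ hJ h₁ ha hθa, ncard_eq_three]
  obtain ⟨ha0, -⟩ := ha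
  exact ⟨_, _, _, by grind, by grind, by grind, rfl⟩
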